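/- arXiv:1910.04295 — 4 statements merged into one kernel-verified Lean document; each statement's English description precedes it below -/
import Mathlib

section
/- If γ‖A-BK‖² < 1, then the discounted state covariance satisfies Σ^y_K = T^y_K(Σ_{y_0} + (γ/(1-γ)) Σ¹), where T^y_K(X) = Σ_{t≥0} γᵗ (A-BK)ᵗ X ((A-BK)ᵀ)ᵗ, Σ_{y_0} = E[y_0 y_0ᵀ], and Σ¹ = E[ε¹_1 (ε¹_1)ᵀ]. -/
/-!
Writing `M = A - BK`, the noise injected at lag `s` contributes `Mˢ Σ¹ (Mᵀ)ˢ` to every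
`Cov(y_t)` with `t > s`, so it is weighted by `∑_{t>s} γᵗ = γ/(1-γ) · γˢ`. Rather than
exchanging the two sums, this is obtained from the shift identity `D = γ D + γ T(Σ¹)` for the
discounted sum `D` of the partial sums. The bound `‖Mˢ X (Mᵀ)ˢ‖ ≤ ‖X‖ (‖M‖²)ˢ` together with
`γ‖M‖² < 1` makes every series involved absolutely convergent.
-/

open scoped Matrix.Norms.L2Operator
open Matrix

open Finset in
theorem tsum_geometric_smul_partialSum {E : Type*} [AddCommGroup E] [Module ℝ E]
    [TopologicalSpace E] [IsTopologicalAddGroup E] [ContinuousConstSMul ℝ E] [T2Space E]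
    {γ : ℝ} (hγ : γ ≠ 1) {a : ℕ → E} (ha : Summable fun t ↦ γ ^ t • a t)
    (hc : Summable fun t ↦ γ ^ t • ∑ s ∈ range t, a s) :
    ∑' t, γ ^ t • ∑ s ∈ range t, a s = (γ / (1 - γ)) • ∑' t, γ ^ t • a t := by
  set D := ∑' t, γ ^ t • ∑ s ∈ range t, a s with hD
  have hshift : D = γ • D + γ • ∑' t, γ ^ t • a t := by
    calc D = ∑' t, (γ • (γ ^ t • ∑ s ∈ range t, a s) + γ • (γ ^ t • a t)) := by
          rw [hD, hc.tsum_eq_zero_add]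
          simp only [range_zero, sum_empty, smul_zero, zero_add, sum_range_succ, smul_add,
            smul_smul, pow_succ']
      _ = γ • D + γ • ∑' t, γ ^ t • a t := by
          rw [(hc.const_smul γ).tsum_add (ha.const_smul γ), tsum_const_smul'', tsum_const_smul'']
  have hγ' : 1 - γ ≠ 0 := sub_ne_zero.mpr hγ.symm
  have : (1 - γ) • D = γ • ∑' t, γ ^ t • a t := by
    rw [sub_smul, one_smul, sub_eq_iff_eq_add, add_comm]; exact hshift
  rw [div_eq_inv_mul, mul_smul, ← this, smul_smul, inv_mul_cancel₀ hγ', one_smul]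

section GeometricBound

variable {E : Type*} [NormedAddCommGroup E] [NormedSpace ℝ E] [CompleteSpace E]
  {γ r C : ℝ} {a : ℕ → E}

theorem summable_geometric_smul_of_norm_le (hγ : 0 ≤ γ) (hr : 0 ≤ r) (hγr : γ * r < 1)
    (ha : ∀ s, ‖a s‖ ≤ C * r ^ s) : Summable fun t ↦ γ ^ t • a t := by
  refine .of_norm_bounded ((summable_geometric_of_lt_one (by positivity) hγr).mul_left C)
    fun t ↦ ?_
  have hC : 0 ≤ C := (norm_nonneg _).trans (by simpa using ha 0)
  calc ‖γ ^ t • a t‖ = γ ^ t * ‖a t‖ := by rw [norm_smul, norm_pow, Real.norm_of_nonneg hγ]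
    _ ≤ γ ^ t * (C * r ^ t) := by gcongr; exact ha t
    _ = C * (γ * r) ^ t := by ring

open Finset in
theorem summable_geometric_smul_partialSum_of_norm_le (hγ : 0 ≤ γ) (hγ1 : γ < 1)
    (hr : 0 ≤ r) (hγr : γ * r < 1) (ha : ∀ s, ‖a s‖ ≤ C * r ^ s) :
    Summable fun t ↦ γ ^ t • ∑ s ∈ range t, a s := by
  set ρ := max γ (γ * r)
  have hρ : ‖ρ‖ < 1 := by
    rw [Real.norm_of_nonneg (le_max_of_le_left hγ)]; exact max_lt hγ1 hγr
  have hC : 0 ≤ C := (norm_nonneg _).trans (by simpa using ha 0)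
  have hdom : ∀ s t, s ≤ t → γ ^ t * r ^ s ≤ ρ ^ t := fun s t hst ↦ by
    obtain ⟨u, rfl⟩ := Nat.exists_eq_add_of_le hst
    calc γ ^ (s + u) * r ^ s = (γ * r) ^ s * γ ^ u := by ring
      _ ≤ ρ ^ s * ρ ^ u := by gcongr <;> simp [ρ]
      _ = ρ ^ (s + u) := (pow_add _ _ _).symm
  refine .of_norm_bounded
    (((summable_pow_mul_geometric_of_norm_lt_one 1 hρ).mul_left C).congr fun t ↦ by
      rw [pow_one]) fun t ↦ ?_
  calc ‖γ ^ t • ∑ s ∈ range t, a s‖ ≤ ∑ s ∈ range t, ‖γ ^ t • a s‖ := by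
        rw [smul_sum]; exact norm_sum_le _ _
    _ ≤ ∑ s ∈ range t, C * ρ ^ t := sum_le_sum fun s hs ↦ by
        rw [norm_smul, norm_pow, Real.norm_of_nonneg hγ]
        calc γ ^ t * ‖a s‖ ≤ γ ^ t * (C * r ^ s) := by gcongr; exact ha s
          _ = C * (γ ^ t * r ^ s) := by ring
          _ ≤ C * ρ ^ t := by gcongr; exact hdom s t (mem_range.mp hs).le
    _ = C * (t * ρ ^ t) := by rw [sum_const, card_range, nsmul_eq_mul]; ring

end GeometricBound

theorem norm_pow_mul_mul_pow_le {R : Type*} [NormedRing R] (M N X : R) (s : ℕ) :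
    ‖M ^ s * X * N ^ s‖ ≤ (‖M‖ * ‖N‖) ^ s * ‖X‖ := by
  induction s with
  | zero => simp
  | succ s ih =>
    calc ‖M ^ (s + 1) * X * N ^ (s + 1)‖ = ‖M * (M ^ s * X * N ^ s) * N‖ := by
          rw [pow_succ' M, pow_succ N]; simp only [mul_assoc]
      _ ≤ ‖M‖ * ‖M ^ s * X * N ^ s‖ * ‖N‖ := norm_mul₃_le
      _ ≤ ‖M‖ * ((‖M‖ * ‖N‖) ^ s * ‖X‖) * ‖N‖ := by gcongr
      _ = (‖M‖ * ‖N‖) ^ (s + 1) * ‖X‖ := by ring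

theorem Matrix.l2_opNorm_transpose {m n : Type*} [Fintype m] [Fintype n] [DecidableEq m]
    [DecidableEq n]
    (A : Matrix m n ℝ) : ‖Aᵀ‖ = ‖A‖ := by
  rw [← conjTranspose_eq_transpose_of_trivial, l2_opNorm_conjTranspose]

theorem Matrix.l2_opNorm_pow_mul_mul_transpose_pow_le {n : Type*} [Fintype n] [DecidableEq n]
    (M X : Matrix n n ℝ) (s : ℕ) : ‖M ^ s * X * Mᵀ ^ s‖ ≤ ‖X‖ * (‖M‖ ^ 2) ^ s := by
  have := norm_pow_mul_mul_pow_le M Mᵀ X s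
  rwa [l2_opNorm_transpose, ← sq, mul_comm] at this

theorem stmt_3_general {d l : ℕ} (γ : ℝ) (hγ : γ ∈ Set.Ioo (0:ℝ) 1)
    (A : Matrix (Fin d) (Fin d) ℝ) (B : Matrix (Fin d) (Fin l) ℝ)
    (K : Matrix (Fin l) (Fin d) ℝ)
    (hadm : γ * ‖A - B * K‖ ^ 2 < 1)
    (S0 S1 : Matrix (Fin d) (Fin d) ℝ) :
    (∑' t : ℕ, γ ^ t •
        ((A - B * K) ^ t * S0 * ((A - B * K)ᵀ) ^ t
          + ∑ s ∈ Finset.range t, (A - B * K) ^ s * S1 * ((A - B * K)ᵀ) ^ s))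
      =
    ∑' t : ℕ, γ ^ t •
        ((A - B * K) ^ t * (S0 + (γ / (1 - γ)) • S1) * ((A - B * K)ᵀ) ^ t) := by
  set M := A - B * K
  obtain ⟨hγ0, hγ1⟩ := hγ
  have hsum (X : Matrix (Fin d) (Fin d) ℝ) : Summable fun t ↦ γ ^ t • (M ^ t * X * Mᵀ ^ t) :=
    summable_geometric_smul_of_norm_le hγ0.le (by positivity) hadm
      (l2_opNorm_pow_mul_mul_transpose_pow_le M X)
  have hsum_partial :=
    summable_geometric_smul_partialSum_of_norm_le hγ0.le hγ1 (by positivity) hadm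
      (l2_opNorm_pow_mul_mul_transpose_pow_le M S1)
  calc _ = ∑' t, γ ^ t • (M ^ t * S0 * Mᵀ ^ t)
        + ∑' t, γ ^ t • ∑ s ∈ Finset.range t, M ^ s * S1 * Mᵀ ^ s := by
        rw [← (hsum S0).tsum_add hsum_partial]; simp only [smul_add]
    _ = ∑' t, γ ^ t • (M ^ t * S0 * Mᵀ ^ t)
        + (γ / (1 - γ)) • ∑' t, γ ^ t • (M ^ t * S1 * Mᵀ ^ t) := by
        rw [tsum_geometric_smul_partialSum hγ1.ne (hsum S1) hsum_partial]
    _ = _ := by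
        rw [← tsum_const_smul'', ← (hsum S0).tsum_add ((hsum S1).const_smul _)]
        refine tsum_congr fun t ↦ ?_
        rw [mul_add, add_mul, mul_smul_comm, smul_mul_assoc, smul_add, smul_comm (γ ^ t)]

/-- If `γ‖A-BK‖² < 1`, the discounted state covariance
`Σ^y_K = E ∑ γ^t y_t y_tᵀ` (expressed via the closed-loop covariance recursion
`Cov(y_t) = M^t Σ₀ (Mᵀ)^t + ∑_{s<t} M^s Σ¹ (Mᵀ)^s` with `M = A-BK`) equals
`T^y_K(Σ₀ + (γ/(1-γ)) Σ¹)` where `T^y_K(X) = ∑ γ^t M^t X (Mᵀ)^t`. -/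
theorem stmt_3 {d l : ℕ} (γ : ℝ) (hγ : γ ∈ Set.Ioo (0:ℝ) 1)
    (A : Matrix (Fin d) (Fin d) ℝ) (B : Matrix (Fin d) (Fin l) ℝ)
    (K : Matrix (Fin l) (Fin d) ℝ)
    (hadm : γ * ‖A - B * K‖ ^ 2 < 1)
    (S0 S1 : Matrix (Fin d) (Fin d) ℝ)
    (hS0 : S0.PosSemidef) (hS1 : S1.PosSemidef) :
    (∑' t : ℕ, γ ^ t •
        ((A - B * K) ^ t * S0 * ((A - B * K)ᵀ) ^ t
          + ∑ s ∈ Finset.range t, (A - B * K) ^ s * S1 * ((A - B * K)ᵀ) ^ s))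
      =
    ∑' t : ℕ, γ ^ t •
        ((A - B * K) ^ t * (S0 + (γ / (1 - γ)) • S1) * ((A - B * K)ᵀ) ^ t) :=
  stmt_3_general γ hγ A B K hadm S0 S1
end

section
/- The operator norms satisfy ‖P^y_K‖ ≤ C_y(K)/λ¹_y and ‖Σ^y_K‖ ≤ C_y(K)/λ_min(Q), where λ¹_y = λ_min(Σ_{y_0} + (γ/(1-γ))Σ¹) is assumed positive. -/
/-!
With `M = A - BK` and `Σ = Σ_{y₀} + (γ/(1-γ)) Σ¹`, both matrices are discounted Lyapunov sums:
`P = ∑ γᵗ (Mᵀ)ᵗ (Q + KᵀRK) Mᵗ` and `Σ^y_K = ∑ γᵗ Mᵗ Σ (Mᵀ)ᵗ`, each being the unique fixed point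
of a contraction `X ↦ C + γ N X Nᵀ` with `N = Mᵀ`, resp. `N = M` (for `Σ^y_K`, the noise injected
at every step contributes `∑ₜ γᵗ⁺¹ = γ/(1-γ)`). Cycling the trace termwise gives `C_y(K) = tr(Σ P)`. For positive
semidefinite `X, Y` one has `‖Y‖ ≤ tr Y` and `λ_min(X) tr Y ≤ tr(X Y)`, hence
`λ_min(Σ) ‖P‖ ≤ tr(Σ P) = C_y(K)` and `λ_min(Q) ‖Σ^y_K‖ ≤ tr(Q Σ^y_K) ≤ C_y(K)`.
-/

open scoped Matrix.Norms.L2Operator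
open Matrix

/-- Minimal eigenvalue of a symmetric matrix, via the Rayleigh quotient. -/
noncomputable def lamMin {d : ℕ} (A : Matrix (Fin d) (Fin d) ℝ) : ℝ :=
  ⨅ x : {x : Fin d → ℝ // x ≠ 0}, (x.1 ⬝ᵥ A.mulVec x.1) / (x.1 ⬝ᵥ x.1)

/-- Discounted covariance `Σ^y_K` of `y_{t+1} = (A-BK)y_t + ε¹_{t+1}`. -/
noncomputable def SigY {d l : ℕ} (γ : ℝ)
    (A : Matrix (Fin d) (Fin d) ℝ) (B : Matrix (Fin d) (Fin l) ℝ)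
    (Sy0 S1 : Matrix (Fin d) (Fin d) ℝ)
    (K : Matrix (Fin l) (Fin d) ℝ) : Matrix (Fin d) (Fin d) ℝ :=
  ∑' t : ℕ, γ ^ t •
    ((A - B * K) ^ t * Sy0 * ((A - B * K)ᵀ) ^ t
      + ∑ s ∈ Finset.range t, (A - B * K) ^ s * S1 * ((A - B * K)ᵀ) ^ s)

/-- The cost `C_y(K) = Tr((Q+KᵀRK) Σ^y_K)`
(`= E[y₀ᵀP^y_K y₀] + (γ/(1-γ)) E[(ε¹)ᵀ P^y_K ε¹]`). -/
noncomputable def Cy {d l : ℕ} (γ : ℝ)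
    (A : Matrix (Fin d) (Fin d) ℝ) (B : Matrix (Fin d) (Fin l) ℝ)
    (Q : Matrix (Fin d) (Fin d) ℝ) (R : Matrix (Fin l) (Fin l) ℝ)
    (Sy0 S1 : Matrix (Fin d) (Fin d) ℝ)
    (K : Matrix (Fin l) (Fin d) ℝ) : ℝ :=
  ((Q + Kᵀ * R * K) * SigY γ A B Sy0 S1 K).trace

namespace Matrix

variable {m n : Type*} [Fintype m] [Fintype n]

lemma trace_transpose_mul_self (B : Matrix m n ℝ) : (Bᵀ * B).trace = ∑ i, ∑ j, B i j ^ 2 := by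
  rw [trace, Finset.sum_comm]
  simp [mul_apply, sq]

lemma PosSemidef.tsum {ι : Type*} {f : ι → Matrix n n ℝ} (hf : Summable f)
    (h : ∀ i, (f i).PosSemidef) : (∑' i, f i).PosSemidef := by
  refine .of_dotProduct_mulVec_nonneg ?_ fun x => ?_
  · rw [IsHermitian, conjTranspose_tsum]
    exact tsum_congr fun i => (h i).1
  · let q : Matrix n n ℝ →ₗ[ℝ] ℝ := dotProductBilin ℝ ℝ (star x) ∘ₗ (mulVecBilin ℝ ℝ).flip x
    change 0 ≤ q (∑' i, f i)
    rw [hf.map_tsum q q.continuous_of_finiteDimensional]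
    exact tsum_nonneg fun i => (h i).dotProduct_mulVec_nonneg x

variable [DecidableEq n]

lemma l2_opNorm_sq_le_sum_sq (B : Matrix m n ℝ) : ‖B‖ ^ 2 ≤ ∑ i, ∑ j, B i j ^ 2 := by
  rw [← Real.sq_sqrt (by positivity : 0 ≤ ∑ i, ∑ j, B i j ^ 2)]
  gcongr
  refine ContinuousLinearMap.opNorm_le_bound _ (Real.sqrt_nonneg _) fun x => ?_
  rw [EuclideanSpace.norm_eq, EuclideanSpace.norm_eq, ← Real.sqrt_mul (by positivity)]
  refine Real.sqrt_le_sqrt ?_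
  simp only [Real.norm_eq_abs, sq_abs, Finset.sum_mul]
  refine Finset.sum_le_sum fun i _ => ?_
  rw [← Finset.sum_mul]
  exact Finset.sum_mul_sq_le_sq_mul_sq _ (B i) x

lemma l2_opNorm_transpose_s7 [DecidableEq m] (X : Matrix m n ℝ) : ‖Xᵀ‖ = ‖X‖ := by
  rw [← conjTranspose_eq_transpose_of_trivial, l2_opNorm_conjTranspose]

namespace PosSemidef

variable {X Y : Matrix n n ℝ}

lemma exists_eq_transpose_mul_self (hX : X.PosSemidef) : ∃ B : Matrix n n ℝ, X = Bᵀ * B := by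
  open scoped MatrixOrder in
  exact CStarAlgebra.nonneg_iff_eq_star_mul_self.mp hX.nonneg

lemma l2_opNorm_le_trace (hX : X.PosSemidef) : ‖X‖ ≤ X.trace := by
  obtain ⟨B, rfl⟩ := hX.exists_eq_transpose_mul_self
  rw [← conjTranspose_eq_transpose_of_trivial, l2_opNorm_conjTranspose_mul_self,
    conjTranspose_eq_transpose_of_trivial, trace_transpose_mul_self, ← sq]
  exact l2_opNorm_sq_le_sum_sq B

lemma trace_mul_nonneg (hX : X.PosSemidef) (hY : Y.PosSemidef) : 0 ≤ (X * Y).trace := by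
  obtain ⟨B, rfl⟩ := hX.exists_eq_transpose_mul_self
  rw [Matrix.mul_assoc, trace_mul_comm]
  simpa [conjTranspose_eq_transpose_of_trivial] using (hY.mul_mul_conjTranspose_same B).trace_nonneg

end PosSemidef

end Matrix

section lamMin

lemma dotProduct_self_nonneg {ι : Type*} [Fintype ι] (x : ι → ℝ) : 0 ≤ x ⬝ᵥ x :=
  Finset.sum_nonneg fun i _ => mul_self_nonneg (x i)

lemma dotProduct_self_pos {ι : Type*} [Fintype ι] {x : ι → ℝ} (hx : x ≠ 0) : 0 < x ⬝ᵥ x :=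
  (dotProduct_self_nonneg x).lt_of_ne (Ne.symm (dotProduct_self_eq_zero.not.2 hx))

variable {d : ℕ} {X Y : Matrix (Fin d) (Fin d) ℝ}

lemma dotProduct_sub_smul_one_mulVec (X : Matrix (Fin d) (Fin d) ℝ) (c : ℝ) (x : Fin d → ℝ) :
    x ⬝ᵥ (X - c • 1) *ᵥ x = x ⬝ᵥ X *ᵥ x - c * (x ⬝ᵥ x) := by
  rw [sub_mulVec, dotProduct_sub, smul_mulVec, one_mulVec, dotProduct_smul, smul_eq_mul]

lemma Matrix.PosSemidef.rayleigh_nonneg (hX : X.PosSemidef) (x : Fin d → ℝ) :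
    0 ≤ x ⬝ᵥ X *ᵥ x / (x ⬝ᵥ x) :=
  div_nonneg (by simpa using hX.dotProduct_mulVec_nonneg x) (dotProduct_self_nonneg x)

lemma Matrix.PosSemidef.lamMin_nonneg (hX : X.PosSemidef) : 0 ≤ lamMin X :=
  Real.iInf_nonneg fun y => hX.rayleigh_nonneg y.1

lemma lamMin_mul_dotProduct_self_le (hX : X.PosSemidef) (x : Fin d → ℝ) :
    lamMin X * (x ⬝ᵥ x) ≤ x ⬝ᵥ X *ᵥ x := by
  rcases eq_or_ne x 0 with rfl | hx
  · simp
  have hbdd : BddBelow (Set.range fun y : {y : Fin d → ℝ // y ≠ 0} =>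
      y.1 ⬝ᵥ X *ᵥ y.1 / (y.1 ⬝ᵥ y.1)) :=
    ⟨0, Set.forall_mem_range.2 fun y => hX.rayleigh_nonneg y.1⟩
  exact (le_div_iff₀ (dotProduct_self_pos hx)).1 (ciInf_le hbdd ⟨x, hx⟩)

lemma le_lamMin [Nonempty (Fin d)] {c : ℝ} (h : (X - c • 1).PosSemidef) : c ≤ lamMin X := by
  have : Nonempty {x : Fin d → ℝ // x ≠ 0} := ⟨⟨1, one_ne_zero⟩⟩
  refine le_ciInf fun ⟨x, hx⟩ => (le_div_iff₀ (dotProduct_self_pos hx)).2 ?_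
  have := h.dotProduct_mulVec_nonneg x
  rw [star_trivial, dotProduct_sub_smul_one_mulVec] at this
  linarith

lemma nonempty_of_lamMin_ne_zero (h : lamMin X ≠ 0) : Nonempty (Fin d) := by
  by_contra hd
  have : IsEmpty {x : Fin d → ℝ // x ≠ 0} :=
    ⟨fun ⟨x, hx⟩ => hx (funext fun i => (hd ⟨i⟩).elim)⟩
  exact h (Real.iInf_of_isEmpty _)

lemma Matrix.PosSemidef.sub_lamMin_smul_one (hX : X.PosSemidef) :
    (X - lamMin X • 1).PosSemidef := by
  refine .of_dotProduct_mulVec_nonneg (hX.1.sub (isHermitian_one.smul (star_trivial _)))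
    fun x => ?_
  rw [star_trivial, dotProduct_sub_smul_one_mulVec]
  linarith [lamMin_mul_dotProduct_self_le hX x]

lemma Matrix.PosDef.lamMin_pos [Nonempty (Fin d)] (hX : X.PosDef) : 0 < lamMin X := by
  open scoped MatrixOrder in
  obtain ⟨c, hc, hle⟩ := (CFC.exists_pos_algebraMap_le_iff hX.isStrictlyPositive.isSelfAdjoint).2
    fun _ h => hX.isStrictlyPositive.spectrum_pos h
  refine hc.trans_le (le_lamMin ?_)
  simpa [Matrix.le_iff, Algebra.algebraMap_eq_smul_one] using hle

lemma Matrix.PosSemidef.norm_mul_lamMin_le_trace_mul (hX : X.PosSemidef) (hY : Y.PosSemidef) :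
    ‖Y‖ * lamMin X ≤ (X * Y).trace := by
  have hshift := hX.sub_lamMin_smul_one.trace_mul_nonneg hY
  rw [Matrix.sub_mul, trace_sub, smul_mul, Matrix.one_mul, trace_smul, smul_eq_mul] at hshift
  nlinarith [hY.l2_opNorm_le_trace, hX.lamMin_nonneg]

end lamMin

section Lyapunov

variable {n : Type*} [Fintype n] [DecidableEq n] {γ : ℝ} {M : Matrix n n ℝ}

lemma Matrix.norm_mul_mul_transpose_le (M X : Matrix n n ℝ) : ‖M * X * Mᵀ‖ ≤ ‖M‖ ^ 2 * ‖X‖ :=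
  calc ‖M * X * Mᵀ‖ ≤ ‖M‖ * ‖X‖ * ‖Mᵀ‖ :=
        (l2_opNorm_mul _ _).trans (mul_le_mul_of_nonneg_right (l2_opNorm_mul _ _) (norm_nonneg _))
    _ = ‖M‖ ^ 2 * ‖X‖ := by rw [l2_opNorm_transpose_s7]; ring

lemma Matrix.pow_succ_mul_mul_transpose_pow_succ (M C : Matrix n n ℝ) (t : ℕ) :
    M ^ (t + 1) * C * Mᵀ ^ (t + 1) = M * (M ^ t * C * Mᵀ ^ t) * Mᵀ := by
  rw [pow_succ' M, pow_succ Mᵀ]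
  simp only [Matrix.mul_assoc]

lemma Matrix.norm_pow_mul_mul_transpose_pow_le (M C : Matrix n n ℝ) (t : ℕ) :
    ‖M ^ t * C * Mᵀ ^ t‖ ≤ (‖M‖ ^ 2) ^ t * ‖C‖ := by
  induction t with
  | zero => simp
  | succ t ih =>
    rw [pow_succ_mul_mul_transpose_pow_succ, pow_succ', mul_assoc (‖M‖ ^ 2)]
    exact (norm_mul_mul_transpose_le _ _).trans (mul_le_mul_of_nonneg_left ih (by positivity))

def lyapunovOp (γ : ℝ) (M : Matrix n n ℝ) : Matrix n n ℝ →ₗ[ℝ] Matrix n n ℝ :=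
  γ • (LinearMap.mulRight ℝ Mᵀ ∘ₗ LinearMap.mulLeft ℝ M)

@[simp]
lemma lyapunovOp_apply (γ : ℝ) (M X : Matrix n n ℝ) : lyapunovOp γ M X = γ • (M * X * Mᵀ) := rfl

noncomputable def lyapunovSum (γ : ℝ) (M C : Matrix n n ℝ) : Matrix n n ℝ :=
  ∑' t : ℕ, γ ^ t • (M ^ t * C * Mᵀ ^ t)

lemma summable_lyapunovSum (hγ : 0 ≤ γ) (hM : γ * ‖M‖ ^ 2 < 1) (C : Matrix n n ℝ) :
    Summable fun t : ℕ => γ ^ t • (M ^ t * C * Mᵀ ^ t) := by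
  refine .of_norm_bounded ((summable_geometric_of_lt_one (by positivity) hM).mul_right ‖C‖)
    fun t => ?_
  rw [norm_smul, Real.norm_of_nonneg (pow_nonneg hγ t), mul_pow, mul_assoc (γ ^ t)]
  exact mul_le_mul_of_nonneg_left (norm_pow_mul_mul_transpose_pow_le M C t) (pow_nonneg hγ t)

lemma lyapunovSum_eq (hγ : 0 ≤ γ) (hM : γ * ‖M‖ ^ 2 < 1) (C : Matrix n n ℝ) :
    lyapunovSum γ M C = C + lyapunovOp γ M (lyapunovSum γ M C) := by
  have hs := summable_lyapunovSum hγ hM C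
  calc lyapunovSum γ M C
      = γ ^ 0 • (M ^ 0 * C * Mᵀ ^ 0) + ∑' t : ℕ, γ ^ (t + 1) • (M ^ (t + 1) * C * Mᵀ ^ (t + 1)) :=
        hs.tsum_eq_zero_add
    _ = C + ∑' t : ℕ, lyapunovOp γ M (γ ^ t • (M ^ t * C * Mᵀ ^ t)) := by
        congr 1
        · simp
        · refine tsum_congr fun t => ?_
          rw [lyapunovOp_apply, pow_succ_mul_mul_transpose_pow_succ, Matrix.mul_smul,
            Matrix.smul_mul, smul_smul, pow_succ']
    _ = C + lyapunovOp γ M (lyapunovSum γ M C) := by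
        rw [lyapunovSum, hs.map_tsum _ (lyapunovOp γ M).continuous_of_finiteDimensional]

lemma eq_lyapunovSum_of_eq (hγ : 0 ≤ γ) (hM : γ * ‖M‖ ^ 2 < 1) {C X : Matrix n n ℝ}
    (hX : X = C + lyapunovOp γ M X) : X = lyapunovSum γ M C := by
  have hY := lyapunovSum_eq hγ hM C
  generalize lyapunovSum γ M C = Y at hY ⊢
  have hdiff : X - Y = lyapunovOp γ M (X - Y) := by
    calc X - Y = (C + lyapunovOp γ M X) - (C + lyapunovOp γ M Y) := by rw [← hX, ← hY]
      _ = lyapunovOp γ M (X - Y) := by rw [map_sub]; abel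
  have hcontract : ‖X - Y‖ ≤ γ * ‖M‖ ^ 2 * ‖X - Y‖ := by
    conv_lhs => rw [hdiff, lyapunovOp_apply, norm_smul, Real.norm_of_nonneg hγ]
    rw [mul_assoc γ]
    exact mul_le_mul_of_nonneg_left (norm_mul_mul_transpose_le _ _) hγ
  have : ‖X - Y‖ = 0 := by nlinarith [norm_nonneg (X - Y)]
  exact sub_eq_zero.mp (norm_eq_zero.mp this)

lemma posSemidef_lyapunovSum (hγ : 0 ≤ γ) (hM : γ * ‖M‖ ^ 2 < 1) {C : Matrix n n ℝ}
    (hC : C.PosSemidef) : (lyapunovSum γ M C).PosSemidef := by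
  refine .tsum (summable_lyapunovSum hγ hM C) fun t => .smul ?_ (pow_nonneg hγ t)
  simpa [conjTranspose_eq_transpose_of_trivial, transpose_pow] using
    hC.mul_mul_conjTranspose_same (M ^ t)

lemma trace_mul_lyapunovSum (hγ : 0 ≤ γ) (hM : γ * ‖M‖ ^ 2 < 1) (Q S : Matrix n n ℝ) :
    (Q * lyapunovSum γ M S).trace = (lyapunovSum γ Mᵀ Q * S).trace := by
  have hMT : γ * ‖Mᵀ‖ ^ 2 < 1 := by rwa [l2_opNorm_transpose_s7]
  let f : Matrix n n ℝ →ₗ[ℝ] ℝ := traceLinearMap n ℝ ℝ ∘ₗ LinearMap.mulLeft ℝ Q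
  let g : Matrix n n ℝ →ₗ[ℝ] ℝ := traceLinearMap n ℝ ℝ ∘ₗ LinearMap.mulRight ℝ S
  change f (lyapunovSum γ M S) = g (lyapunovSum γ Mᵀ Q)
  rw [lyapunovSum, lyapunovSum,
    (summable_lyapunovSum hγ hM S).map_tsum f f.continuous_of_finiteDimensional,
    (summable_lyapunovSum hγ hMT Q).map_tsum g g.continuous_of_finiteDimensional]
  refine tsum_congr fun t => ?_
  simp only [f, g, LinearMap.comp_apply, map_smul, LinearMap.mulLeft_apply,
    LinearMap.mulRight_apply, traceLinearMap_apply, transpose_transpose]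
  rw [← Matrix.mul_assoc, trace_mul_comm]
  simp only [Matrix.mul_assoc]

end Lyapunov

section DiscountedCovariance

variable {n : Type*} [Fintype n] [DecidableEq n] {γ : ℝ} {M : Matrix n n ℝ}

/-- `γᵗ E[yₜyₜᵀ]` for `yₜ₊₁ = M yₜ + εₜ₊₁`, `E[y₀y₀ᵀ] = C₀`, noise covariance `C₁`. -/
noncomputable def covarianceTerm (γ : ℝ) (M C₀ C₁ : Matrix n n ℝ) (t : ℕ) : Matrix n n ℝ :=
  γ ^ t • (M ^ t * C₀ * Mᵀ ^ t + ∑ s ∈ Finset.range t, M ^ s * C₁ * Mᵀ ^ s)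

lemma covarianceTerm_succ (γ : ℝ) (M C₀ C₁ : Matrix n n ℝ) (t : ℕ) :
    covarianceTerm γ M C₀ C₁ (t + 1)
      = lyapunovOp γ M (covarianceTerm γ M C₀ C₁ t) + γ ^ (t + 1) • C₁ := by
  simp only [covarianceTerm, lyapunovOp_apply, Finset.sum_range_succ', pow_zero, Matrix.one_mul,
    Matrix.mul_one, pow_succ_mul_mul_transpose_pow_succ]
  simp only [Matrix.mul_add, Matrix.add_mul, Finset.mul_sum, Finset.sum_mul, Matrix.mul_smul,
    Matrix.smul_mul, smul_smul, smul_add, pow_succ γ, mul_comm γ (γ ^ t)]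
  abel

lemma norm_covarianceTerm_le (hγ : 0 ≤ γ) (M C₀ C₁ : Matrix n n ℝ) (t : ℕ) :
    ‖covarianceTerm γ M C₀ C₁ t‖
      ≤ (γ * max (‖M‖ ^ 2) 1) ^ t * ‖C₀‖ + t * (γ * max (‖M‖ ^ 2) 1) ^ t * ‖C₁‖ := by
  have hpow : ∀ s ≤ t, (‖M‖ ^ 2) ^ s ≤ max (‖M‖ ^ 2) 1 ^ t := fun s hs =>
    (pow_le_pow_left₀ (by positivity) (le_max_left _ _) s).trans
      (pow_le_pow_right₀ (le_max_right _ _) hs)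
  have hconj : ∀ (C : Matrix n n ℝ), ∀ s ≤ t,
      ‖M ^ s * C * Mᵀ ^ s‖ ≤ max (‖M‖ ^ 2) 1 ^ t * ‖C‖ := fun C s hs =>
    (norm_pow_mul_mul_transpose_pow_le M C s).trans
      (mul_le_mul_of_nonneg_right (hpow s hs) (norm_nonneg C))
  have hsum : ‖∑ s ∈ Finset.range t, M ^ s * C₁ * Mᵀ ^ s‖ ≤ t * (max (‖M‖ ^ 2) 1 ^ t * ‖C₁‖) :=
    calc _ ≤ ∑ s ∈ Finset.range t, ‖M ^ s * C₁ * Mᵀ ^ s‖ := norm_sum_le _ _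
      _ ≤ ∑ s ∈ Finset.range t, max (‖M‖ ^ 2) 1 ^ t * ‖C₁‖ :=
          Finset.sum_le_sum fun s hs => hconj C₁ s (Finset.mem_range.mp hs).le
      _ = t * (max (‖M‖ ^ 2) 1 ^ t * ‖C₁‖) := by simp
  calc ‖covarianceTerm γ M C₀ C₁ t‖
      ≤ γ ^ t * (max (‖M‖ ^ 2) 1 ^ t * ‖C₀‖ + t * (max (‖M‖ ^ 2) 1 ^ t * ‖C₁‖)) := by
        rw [covarianceTerm, norm_smul, Real.norm_of_nonneg (pow_nonneg hγ t)]
        exact mul_le_mul_of_nonneg_left ((norm_add_le _ _).trans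
          (add_le_add (hconj C₀ t le_rfl) hsum)) (pow_nonneg hγ t)
    _ = _ := by rw [mul_pow]; ring

lemma summable_covarianceTerm (hγ0 : 0 ≤ γ) (hγ1 : γ < 1) (hM : γ * ‖M‖ ^ 2 < 1)
    (C₀ C₁ : Matrix n n ℝ) : Summable (covarianceTerm γ M C₀ C₁) := by
  set ρ := γ * max (‖M‖ ^ 2) 1
  have hρ0 : 0 ≤ ρ := by positivity
  have hρ1 : ρ < 1 := by
    simpa only [ρ, mul_max_of_nonneg _ _ hγ0, mul_one] using max_lt hM hγ1
  refine .of_norm_bounded (.add ?_ ?_) (norm_covarianceTerm_le hγ0 M C₀ C₁)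
  · exact (summable_geometric_of_lt_one hρ0 hρ1).mul_right _
  · simpa using (summable_pow_mul_geometric_of_norm_lt_one 1
      (by rwa [Real.norm_of_nonneg hρ0])).mul_right ‖C₁‖

lemma tsum_covarianceTerm (hγ0 : 0 ≤ γ) (hγ1 : γ < 1) (hM : γ * ‖M‖ ^ 2 < 1)
    (C₀ C₁ : Matrix n n ℝ) :
    ∑' t, covarianceTerm γ M C₀ C₁ t = lyapunovSum γ M (C₀ + (γ / (1 - γ)) • C₁) := by
  have hs := summable_covarianceTerm hγ0 hγ1 hM C₀ C₁
  have hnoise : HasSum (fun t : ℕ => γ ^ (t + 1) • C₁) ((γ / (1 - γ)) • C₁) := by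
    refine HasSum.smul_const ?_ C₁
    simpa [pow_succ', div_eq_mul_inv] using (hasSum_geometric_of_lt_one hγ0 hγ1).mul_left γ
  have hshift : HasSum (fun t => covarianceTerm γ M C₀ C₁ (t + 1))
      (lyapunovOp γ M (∑' t, covarianceTerm γ M C₀ C₁ t) + (γ / (1 - γ)) • C₁) := by
    simp only [covarianceTerm_succ]
    exact (hs.hasSum.map _ (lyapunovOp γ M).continuous_of_finiteDimensional).add hnoise
  have hzero : covarianceTerm γ M C₀ C₁ 0 = C₀ := by simp [covarianceTerm]
  refine eq_lyapunovSum_of_eq hγ0 hM ?_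
  calc ∑' t, covarianceTerm γ M C₀ C₁ t
      = covarianceTerm γ M C₀ C₁ 0 + ∑' t, covarianceTerm γ M C₀ C₁ (t + 1) :=
        hs.tsum_eq_zero_add
    _ = _ := by rw [hzero, hshift.tsum_eq]; abel

end DiscountedCovariance

/-- `‖P^y_K‖ ≤ C_y(K)/λ¹_y` and `‖Σ^y_K‖ ≤ C_y(K)/λ_min(Q)`, where
`λ¹_y = λ_min(Σ_{y₀} + (γ/(1-γ))Σ¹)` is assumed positive and `P^y_K` solves the
Riccati fixed point. -/
theorem stmt_7 {d l : ℕ} (γ : ℝ) (hγ : γ ∈ Set.Ioo (0:ℝ) 1)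
    (A : Matrix (Fin d) (Fin d) ℝ) (B : Matrix (Fin d) (Fin l) ℝ)
    (Q : Matrix (Fin d) (Fin d) ℝ) (R : Matrix (Fin l) (Fin l) ℝ)
    (hQ : Q.PosDef) (hR : R.PosSemidef)
    (Sy0 S1 : Matrix (Fin d) (Fin d) ℝ)
    (hSy0 : Sy0.PosSemidef) (hS1 : S1.PosSemidef)
    (K : Matrix (Fin l) (Fin d) ℝ)
    (hK : γ * ‖A - B * K‖ ^ 2 < 1)
    (P : Matrix (Fin d) (Fin d) ℝ)
    (hP : P = Q + Kᵀ * R * K + γ • ((A - B * K)ᵀ * P * (A - B * K)))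
    (hlam : 0 < lamMin (Sy0 + (γ / (1 - γ)) • S1)) :
    ‖P‖ ≤ Cy γ A B Q R Sy0 S1 K / lamMin (Sy0 + (γ / (1 - γ)) • S1)
    ∧ ‖SigY γ A B Sy0 S1 K‖ ≤ Cy γ A B Q R Sy0 S1 K / lamMin Q := by
  obtain ⟨hγ0, hγ1⟩ := hγ
  have : Nonempty (Fin d) := nonempty_of_lamMin_ne_zero hlam.ne'
  have hCov : (Sy0 + (γ / (1 - γ)) • S1).PosSemidef :=
    hSy0.add (hS1.smul (div_nonneg hγ0.le (by linarith)))
  have hKRK : (Kᵀ * R * K).PosSemidef := by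
    simpa [conjTranspose_eq_transpose_of_trivial] using hR.conjTranspose_mul_mul_same K
  have hKT : γ * ‖(A - B * K)ᵀ‖ ^ 2 < 1 := by rwa [l2_opNorm_transpose_s7]
  have hPsum : P = lyapunovSum γ (A - B * K)ᵀ (Q + Kᵀ * R * K) :=
    eq_lyapunovSum_of_eq hγ0.le hKT (by simpa using hP)
  have hSig : SigY γ A B Sy0 S1 K = lyapunovSum γ (A - B * K) (Sy0 + (γ / (1 - γ)) • S1) :=
    tsum_covarianceTerm hγ0.le hγ1 hK Sy0 S1
  have hPpsd : P.PosSemidef := hPsum ▸ posSemidef_lyapunovSum hγ0.le hKT (hQ.posSemidef.add hKRK)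
  have hSigPsd : (SigY γ A B Sy0 S1 K).PosSemidef := hSig ▸ posSemidef_lyapunovSum hγ0.le hK hCov
  have hCy : Cy γ A B Q R Sy0 S1 K = ((Sy0 + (γ / (1 - γ)) • S1) * P).trace := by
    rw [Cy, hSig, trace_mul_lyapunovSum hγ0.le hK, ← hPsum, trace_mul_comm]
  constructor
  · rw [le_div_iff₀ hlam, hCy]
    exact hCov.norm_mul_lamMin_le_trace_mul hPpsd
  · rw [le_div_iff₀ hQ.lamMin_pos, Cy, Matrix.add_mul, trace_add]
    linarith [hQ.posSemidef.norm_mul_lamMin_le_trace_mul hSigPsd, hKRK.trace_mul_nonneg hSigPsd]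
end

section
/- For any matrix X with ‖X‖ = 1 and any positive definite matrix Σ, one has ‖T^y_K(X)‖ ≤ ‖Σ^{-1/2} X Σ^{-1/2}‖ · ‖T^y_K(Σ)‖. -/
/-!
With `M = A - B K`, `C t = Mᵗ S` and `Y = S⁻¹ X S⁻¹`, the two series are
`Q = ∑ γᵗ C t Y (C t)ᵀ` and `P = ∑ γᵗ C t (C t)ᵀ`; both converge because their terms are
bounded by the geometric sequence `(γ ‖M‖²)ᵗ`. For unit vectors `x`, `y`, each term of
`⟪x, Q y⟫ = ∑ γᵗ ⟪(C t)ᵀ x, Y (C t)ᵀ y⟫` is at most `‖Y‖ γᵗ (‖(C t)ᵀ x‖² + ‖(C t)ᵀ y‖²) / 2`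
by Cauchy–Schwarz and AM-GM, and these sum to `‖Y‖ (⟪x, P x⟫ + ⟪y, P y⟫) / 2 ≤ ‖Y‖ ‖P‖`.
-/

open scoped Matrix.Norms.L2Operator
open Matrix

open scoped InnerProduct

open ContinuousLinearMap in
theorem ContinuousLinearMap.norm_le_of_hasSum_conj {ι E F : Type*}
    [NormedAddCommGroup E] [InnerProductSpace ℝ E] [CompleteSpace E]
    [NormedAddCommGroup F] [InnerProductSpace ℝ F] [CompleteSpace F]
    {w : ι → ℝ} (hw : ∀ i, 0 ≤ w i) {C : ι → F →L[ℝ] E} {Y : F →L[ℝ] F} {P Q : E →L[ℝ] E}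
    (hQ : HasSum (fun i => w i • (C i ∘L Y ∘L (C i)†)) Q)
    (hP : HasSum (fun i => w i • (C i ∘L (C i)†)) P) :
    ‖Q‖ ≤ ‖Y‖ * ‖P‖ := by
  have hasSum_inner {f : ι → E →L[ℝ] E} {T : E →L[ℝ] E} (hf : HasSum f T) (x y : E) :
      HasSum (fun i => inner ℝ x (f i y)) (inner ℝ x (T y)) :=
    ((innerSL ℝ x).comp (apply ℝ E y)).hasSum hf
  have hPx (x : E) : HasSum (fun i => w i * ‖((C i)†) x‖ ^ 2) (inner ℝ x (P x)) := by
    simpa [inner_smul_right, ← adjoint_inner_left, real_inner_self_eq_norm_sq]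
      using hasSum_inner hP x x
  have hQxy (x y : E) :
      HasSum (fun i => w i * inner ℝ (((C i)†) x) (Y (((C i)†) y))) (inner ℝ x (Q y)) := by
    simpa [inner_smul_right, ← adjoint_inner_left] using hasSum_inner hQ x y
  have hPle (x : E) (hx : ‖x‖ = 1) : inner ℝ x (P x) ≤ ‖P‖ :=
    calc inner ℝ x (P x) ≤ ‖x‖ * ‖P x‖ := real_inner_le_norm _ _
      _ ≤ ‖P‖ := by simpa [hx] using P.le_opNorm x
  refine opNorm_le_of_re_inner_le (by positivity) fun y x hy hx => ?_
  rw [RCLike.re_to_real, real_inner_comm]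
  have hterm (i : ι) : w i * inner ℝ (((C i)†) x) (Y (((C i)†) y)) ≤
      ‖Y‖ / 2 * (w i * ‖((C i)†) x‖ ^ 2 + w i * ‖((C i)†) y‖ ^ 2) := by
    set a := ((C i)†) x
    set b := ((C i)†) y
    have hab : inner ℝ a (Y b) ≤ ‖Y‖ * ‖a‖ * ‖b‖ := by
      calc inner ℝ a (Y b) ≤ ‖a‖ * ‖Y b‖ := real_inner_le_norm _ _
        _ ≤ ‖a‖ * (‖Y‖ * ‖b‖) := by gcongr; exact Y.le_opNorm b
        _ = ‖Y‖ * ‖a‖ * ‖b‖ := by ring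
    have hamgm : ‖a‖ * ‖b‖ ≤ (‖a‖ ^ 2 + ‖b‖ ^ 2) / 2 := by
      nlinarith [sq_nonneg (‖a‖ - ‖b‖)]
    have hYab : ‖Y‖ * ‖a‖ * ‖b‖ ≤ ‖Y‖ * ((‖a‖ ^ 2 + ‖b‖ ^ 2) / 2) := by
      rw [mul_assoc]; gcongr
    calc w i * inner ℝ a (Y b) ≤ w i * (‖Y‖ * ((‖a‖ ^ 2 + ‖b‖ ^ 2) / 2)) :=
          mul_le_mul_of_nonneg_left (hab.trans hYab) (hw i)
      _ = _ := by ring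
  calc inner ℝ x (Q y) ≤ ‖Y‖ / 2 * (inner ℝ x (P x) + inner ℝ y (P y)) :=
        hasSum_le hterm (hQxy x y) (((hPx x).add (hPx y)).mul_left _)
    _ ≤ ‖Y‖ / 2 * (‖P‖ + ‖P‖) := by gcongr <;> apply hPle <;> assumption
    _ = ‖Y‖ * ‖P‖ := by ring

theorem norm_smul_pow_mul_mul_star_pow_le {R : Type*} [NormedRing R] [StarRing R]
    [NormedStarGroup R] [NormedAlgebra ℝ R] {γ : ℝ} (hγ : 0 ≤ γ) (a w : R) (t : ℕ) :
    ‖γ ^ t • (a ^ t * w * star a ^ t)‖ ≤ ‖w‖ * (γ * ‖a‖ ^ 2) ^ t := by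
  rcases t.eq_zero_or_pos with rfl | ht
  · simp
  have ha : ‖a ^ t‖ ≤ ‖a‖ ^ t := norm_pow_le' a ht
  calc ‖γ ^ t • (a ^ t * w * star a ^ t)‖ = γ ^ t * ‖a ^ t * w * star a ^ t‖ := by
        rw [norm_smul, Real.norm_of_nonneg (by positivity)]
    _ ≤ γ ^ t * (‖a ^ t‖ * ‖w‖ * ‖a ^ t‖) := by
        gcongr
        refine (norm_mul_le _ _).trans ?_
        rw [← star_pow, norm_star]
        gcongr
        exact norm_mul_le _ _
    _ ≤ γ ^ t * (‖a‖ ^ t * ‖w‖ * ‖a‖ ^ t) := by gcongr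
    _ = ‖w‖ * (γ * ‖a‖ ^ 2) ^ t := by ring

theorem summable_smul_pow_mul_mul_star_pow {R : Type*} [NormedRing R] [StarRing R]
    [NormedStarGroup R] [NormedAlgebra ℝ R] [CompleteSpace R] {γ : ℝ} (hγ : 0 ≤ γ) {a : R}
    (ha : γ * ‖a‖ ^ 2 < 1) (w : R) :
    Summable fun t : ℕ => γ ^ t • (a ^ t * w * star a ^ t) :=
  .of_norm_bounded ((summable_geometric_of_lt_one (by positivity) ha).mul_left ‖w‖)
    (norm_smul_pow_mul_mul_star_pow_le hγ a w)

theorem Matrix.transpose_eq_star {n α : Type*} [Star α] [TrivialStar α] (M : Matrix n n α) :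
    Mᵀ = star M := by
  rw [star_eq_conjTranspose, conjTranspose_eq_transpose_of_trivial]

theorem Matrix.l2_opNorm_le_of_hasSum_conj {ι n : Type*} [Fintype n] [DecidableEq n]
    {w : ι → ℝ} (hw : ∀ i, 0 ≤ w i) {C : ι → Matrix n n ℝ} {Y P Q : Matrix n n ℝ}
    (hQ : HasSum (fun i => w i • (C i * Y * (C i)ᵀ)) Q)
    (hP : HasSum (fun i => w i • (C i * (C i)ᵀ)) P) :
    ‖Q‖ ≤ ‖Y‖ * ‖P‖ := by
  have hΦ : Continuous (toEuclideanCLM (n := n) (𝕜 := ℝ)) :=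
    (toEuclideanCLM (n := n) (𝕜 := ℝ)).toAlgEquiv.toLinearMap.continuous_of_finiteDimensional
  have hΦQ := hQ.map _ hΦ
  have hΦP := hP.map _ hΦ
  simp only [Function.comp_def, map_smul, map_mul, mul_assoc, transpose_eq_star, map_star,
    ContinuousLinearMap.star_eq_adjoint, ContinuousLinearMap.mul_def] at hΦQ hΦP
  rw [← l2_opNorm_toEuclideanCLM Q, ← l2_opNorm_toEuclideanCLM Y, ← l2_opNorm_toEuclideanCLM P]
  exact ContinuousLinearMap.norm_le_of_hasSum_conj hw hΦQ hΦP

theorem stmt_10_general {d l : ℕ} (γ : ℝ) (hγ : γ ∈ Set.Ioo (0:ℝ) 1)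
    (A : Matrix (Fin d) (Fin d) ℝ) (B : Matrix (Fin d) (Fin l) ℝ)
    (K : Matrix (Fin l) (Fin d) ℝ)
    (hK : γ * ‖A - B * K‖ ^ 2 < 1)
    (Sig S : Matrix (Fin d) (Fin d) ℝ)
    (hS : S.PosDef) (hSsq : S * S = Sig) :
    ∀ X : Matrix (Fin d) (Fin d) ℝ, ‖X‖ = 1 →
      ‖∑' t : ℕ, γ ^ t • ((A - B * K) ^ t * X * ((A - B * K)ᵀ) ^ t)‖
        ≤ ‖S⁻¹ * X * S⁻¹‖ *
          ‖∑' t : ℕ, γ ^ t • ((A - B * K) ^ t * Sig * ((A - B * K)ᵀ) ^ t)‖ := by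
  intro X _
  set M := A - B * K
  have hSt : Sᵀ = S := by rw [← conjTranspose_eq_transpose_of_trivial]; exact hS.isHermitian
  have hSdet : IsUnit S.det := (isUnit_iff_isUnit_det S).mp hS.isUnit
  have hconjX (t : ℕ) :
      M ^ t * X * Mᵀ ^ t = M ^ t * S * (S⁻¹ * X * S⁻¹) * (M ^ t * S)ᵀ := by
    simp only [transpose_mul, hSt, transpose_pow, Matrix.mul_assoc,
      mul_nonsing_inv_cancel_left _ _ hSdet, nonsing_inv_mul_cancel_left _ _ hSdet]
  have hconjSig (t : ℕ) : M ^ t * Sig * Mᵀ ^ t = M ^ t * S * (M ^ t * S)ᵀ := by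
    rw [← hSsq, transpose_mul, hSt, transpose_pow]; simp only [Matrix.mul_assoc]
  have hsum (W : Matrix (Fin d) (Fin d) ℝ) :
      Summable fun t : ℕ => γ ^ t • (M ^ t * W * Mᵀ ^ t) := by
    simpa only [transpose_eq_star] using summable_smul_pow_mul_mul_star_pow hγ.1.le hK W
  refine l2_opNorm_le_of_hasSum_conj (C := fun t => M ^ t * S) (fun t => pow_nonneg hγ.1.le t)
    ?_ ?_
  · simpa only [hconjX] using (hsum X).hasSum
  · simpa only [hconjSig] using (hsum Sig).hasSum

/-- for `T^y_K(X) = ∑ γ^t (A-BK)^t X ((A-BK)ᵀ)^t` (admissible `K`),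
any matrix `X` with `‖X‖ = 1` and any positive definite `Σ` (with square root
`S`, `S * S = Σ`): `‖T^y_K(X)‖ ≤ ‖Σ^{-1/2} X Σ^{-1/2}‖ ‖T^y_K(Σ)‖`. -/
theorem stmt_10 {d l : ℕ} (γ : ℝ) (hγ : γ ∈ Set.Ioo (0:ℝ) 1)
    (A : Matrix (Fin d) (Fin d) ℝ) (B : Matrix (Fin d) (Fin l) ℝ)
    (K : Matrix (Fin l) (Fin d) ℝ)
    (hK : γ * ‖A - B * K‖ ^ 2 < 1)
    (Sig S : Matrix (Fin d) (Fin d) ℝ)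
    (hSig : Sig.PosDef) (hS : S.PosDef) (hSsq : S * S = Sig) :
    ∀ X : Matrix (Fin d) (Fin d) ℝ, ‖X‖ = 1 →
      ‖∑' t : ℕ, γ ^ t • ((A - B * K) ^ t * X * ((A - B * K)ᵀ) ^ t)‖
        ≤ ‖S⁻¹ * X * S⁻¹‖ *
          ‖∑' t : ℕ, γ ^ t • ((A - B * K) ^ t * Sig * ((A - B * K)ᵀ) ^ t)‖ :=
  stmt_10_general γ hγ A B K hK Sig S hS hSsq
end

section
/- Finite-population cost error: for any admissible θ = (K,L), |C^N(θ) - C(θ)| ≤ (d/N)(‖P^y_K‖ + ‖P^z_L‖)(‖Σ_{y_0}‖ + (γ/(1-γ))‖Σ¹‖). More precisely, C^N_y(θ) - C_y(K) = -(1/N)Tr(P^y_K(Σ_{y_0} + (γ/(1-γ))Σ¹)) and C^N_μ(θ) - C_z(L) = (1/N)Tr(P^z_L(Σ_{y_0} + (γ/(1-γ))Σ¹)). -/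
open scoped Matrix.Norms.L2Operator
open Matrix

/-!
Both cost identities are linear algebra: the `N`-agent covariances differ from the mean-field
ones by `∓(1/N)` times `Σ_{y₀}` and `Σ¹`, and the trace is linear. Adding them, the total error
is `(1/N) Tr((P^z_L - P^y_K) X)` with `X = Σ_{y₀} + (γ/(1-γ))Σ¹`. Every diagonal entry of a
matrix is bounded by its spectral norm, so `|Tr M| ≤ d ‖M‖`, and submultiplicativity finishes.
-/

namespace Matrix

variable {𝕜 m n : Type*} [RCLike 𝕜] [Fintype m] [Fintype n] [DecidableEq n]

lemma norm_apply_le_l2_opNorm (A : Matrix m n 𝕜) (i : m) (j : n) : ‖A i j‖ ≤ ‖A‖ := by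
  have h := A.l2_opNorm_mulVec (EuclideanSpace.single j 1)
  rw [PiLp.norm_single, norm_one, mul_one] at h
  refine le_trans (le_of_eq ?_) ((PiLp.norm_apply_le _ i).trans h)
  simp [mulVec_single]

lemma norm_trace_le_card_mul_l2_opNorm (A : Matrix n n 𝕜) :
    ‖A.trace‖ ≤ Fintype.card n * ‖A‖ :=
  calc ‖A.trace‖ ≤ ∑ i, ‖A i i‖ := norm_sum_le _ _
    _ ≤ ∑ _i : n, ‖A‖ := Finset.sum_le_sum fun i _ => A.norm_apply_le_l2_opNorm i i
    _ = Fintype.card n * ‖A‖ := by simp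

lemma norm_trace_mul_le (A B : Matrix n n 𝕜) :
    ‖(A * B).trace‖ ≤ Fintype.card n * (‖A‖ * ‖B‖) :=
  (norm_trace_le_card_mul_l2_opNorm _).trans <| by gcongr; exact l2_opNorm_mul A B

end Matrix

theorem stmt_19_general {d : ℕ} (γ : ℝ) (hγ : γ ∈ Set.Ioo (0:ℝ) 1)
    (Py Pz : Matrix (Fin d) (Fin d) ℝ)
    (Sy0 Sz0 S1 S0 : Matrix (Fin d) (Fin d) ℝ)
    (N : ℕ)
    -- mean-field costs
    (CyMF CzMF CNy CNmu : ℝ)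
    (hCy : CyMF = (Py * Sy0).trace + (γ / (1 - γ)) * (Py * S1).trace)
    (hCz : CzMF = (Pz * Sz0).trace + (γ / (1 - γ)) * (Pz * S0).trace)
    -- N-agent costs
    (hCNy : CNy = (Py * ((1 - 1 / (N:ℝ)) • Sy0)).trace
      + (γ / (1 - γ)) * (Py * ((1 - 1 / (N:ℝ)) • S1)).trace)
    (hCNmu : CNmu = (Pz * (Sz0 + (1 / (N:ℝ)) • Sy0)).trace
      + (γ / (1 - γ)) * (Pz * (S0 + (1 / (N:ℝ)) • S1)).trace) :
    CNy - CyMF = -(1 / (N:ℝ)) * (Py * (Sy0 + (γ / (1 - γ)) • S1)).trace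
    ∧ CNmu - CzMF = (1 / (N:ℝ)) * (Pz * (Sy0 + (γ / (1 - γ)) • S1)).trace
    ∧ |(CNy + CNmu) - (CyMF + CzMF)|
        ≤ ((d : ℝ) / (N:ℝ)) * (‖Py‖ + ‖Pz‖) * (‖Sy0‖ + (γ / (1 - γ)) * ‖S1‖) := by
  set c := γ / (1 - γ)
  set X := Sy0 + c • S1
  have hc : 0 ≤ c := div_nonneg hγ.1.le (sub_nonneg.2 hγ.2.le)
  have hy : CNy - CyMF = -(1 / (N:ℝ)) * (Py * X).trace := by
    simp only [hCNy, hCy, X, Matrix.mul_smul, Matrix.mul_add, trace_smul, trace_add, smul_eq_mul]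
    ring
  have hz : CNmu - CzMF = (1 / (N:ℝ)) * (Pz * X).trace := by
    simp only [hCNmu, hCz, X, Matrix.mul_smul, Matrix.mul_add, trace_smul, trace_add, smul_eq_mul]
    ring
  have htotal : (CNy + CNmu) - (CyMF + CzMF) = (1 / (N:ℝ)) * ((Pz - Py) * X).trace := by
    rw [Matrix.sub_mul, trace_sub]
    linear_combination hy + hz
  refine ⟨hy, hz, ?_⟩
  have hX : ‖X‖ ≤ ‖Sy0‖ + c * ‖S1‖ :=
    (norm_add_le _ _).trans_eq (by rw [norm_smul_of_nonneg hc])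
  have hP : ‖Pz - Py‖ ≤ ‖Py‖ + ‖Pz‖ := (norm_sub_le _ _).trans_eq (add_comm _ _)
  have htrace := norm_trace_mul_le (Pz - Py) X
  rw [Fintype.card_fin, Real.norm_eq_abs] at htrace
  calc |(CNy + CNmu) - (CyMF + CzMF)| = (1 / (N:ℝ)) * |((Pz - Py) * X).trace| := by
        rw [htotal, abs_mul, abs_of_nonneg (by positivity)]
    _ ≤ (1 / (N:ℝ)) * (d * ((‖Py‖ + ‖Pz‖) * (‖Sy0‖ + c * ‖S1‖))) := by
        gcongr
        exact htrace.trans (by gcongr)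
    _ = _ := by ring

/-- finite-population cost error. With mean-field costs
`C_y(K) = Tr(P^y_K Σ_{y₀}) + (γ/(1-γ))Tr(P^y_K Σ¹)`,
`C_z(L) = Tr(P^z_L Σ_{z₀}) + (γ/(1-γ))Tr(P^z_L Σ⁰)` and `N`-agent analogues using
the initial covariances `Σ^N_{y₀} = (1-1/N)Σ_{y₀}`, `Σ^N_{μ₀} = Σ_{z₀} + (1/N)Σ_{y₀}`
and noise covariances `Σ^{1,N} = (1-1/N)Σ¹`, `Σ^{0,N} = Σ⁰ + (1/N)Σ¹`:
`C^N_y(θ) - C_y(K) = -(1/N)Tr(P^y_K(Σ_{y₀} + (γ/(1-γ))Σ¹))`,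
`C^N_μ(θ) - C_z(L) = (1/N)Tr(P^z_L(Σ_{y₀} + (γ/(1-γ))Σ¹))`, and
`|C^N(θ) - C(θ)| ≤ (d/N)(‖P^y_K‖+‖P^z_L‖)(‖Σ_{y₀}‖+(γ/(1-γ))‖Σ¹‖)`. -/
theorem stmt_19 {d l : ℕ} (γ : ℝ) (hγ : γ ∈ Set.Ioo (0:ℝ) 1)
    (A Abar : Matrix (Fin d) (Fin d) ℝ) (B Bbar : Matrix (Fin d) (Fin l) ℝ)
    (Q Qbar : Matrix (Fin d) (Fin d) ℝ) (R Rbar : Matrix (Fin l) (Fin l) ℝ)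
    (K L : Matrix (Fin l) (Fin d) ℝ)
    (hK : γ * ‖A - B * K‖ ^ 2 < 1)
    (hL : γ * ‖A + Abar - (B + Bbar) * L‖ ^ 2 < 1)
    (Py Pz : Matrix (Fin d) (Fin d) ℝ)
    (hPy : Py = Q + Kᵀ * R * K + γ • ((A - B * K)ᵀ * Py * (A - B * K)))
    (hPz : Pz = Q + Qbar + Lᵀ * (R + Rbar) * L +
      γ • ((A + Abar - (B + Bbar) * L)ᵀ * Pz * (A + Abar - (B + Bbar) * L)))
    (Sy0 Sz0 S1 S0 : Matrix (Fin d) (Fin d) ℝ)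
    (hSy0 : Sy0.PosSemidef) (hSz0 : Sz0.PosSemidef)
    (hS1 : S1.PosSemidef) (hS0 : S0.PosSemidef)
    (N : ℕ) (hN : 0 < N)
    -- mean-field costs
    (CyMF CzMF CNy CNmu : ℝ)
    (hCy : CyMF = (Py * Sy0).trace + (γ / (1 - γ)) * (Py * S1).trace)
    (hCz : CzMF = (Pz * Sz0).trace + (γ / (1 - γ)) * (Pz * S0).trace)
    -- N-agent costs
    (hCNy : CNy = (Py * ((1 - 1 / (N:ℝ)) • Sy0)).trace
      + (γ / (1 - γ)) * (Py * ((1 - 1 / (N:ℝ)) • S1)).trace)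
    (hCNmu : CNmu = (Pz * (Sz0 + (1 / (N:ℝ)) • Sy0)).trace
      + (γ / (1 - γ)) * (Pz * (S0 + (1 / (N:ℝ)) • S1)).trace) :
    CNy - CyMF = -(1 / (N:ℝ)) * (Py * (Sy0 + (γ / (1 - γ)) • S1)).trace
    ∧ CNmu - CzMF = (1 / (N:ℝ)) * (Pz * (Sy0 + (γ / (1 - γ)) • S1)).trace
    ∧ |(CNy + CNmu) - (CyMF + CzMF)|
        ≤ ((d : ℝ) / (N:ℝ)) * (‖Py‖ + ‖Pz‖) * (‖Sy0‖ + (γ / (1 - γ)) * ‖S1‖) :=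
  stmt_19_general γ hγ Py Pz Sy0 Sz0 S1 S0 N CyMF CzMF CNy CNmu hCy hCz hCNy hCNmu
end
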